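/- arXiv:2512.19873 — 3 statements merged into one kernel-verified Lean document; each statement's English description precedes it below -/
import Mathlib

section
/- Let G be an abelian group and let Ψ : M ↦ Ψ_M be an assignment from a monoid of endomorphisms of G such that Ψ is multiplicative (Ψ_{M·N} = Ψ_M ∘ Ψ_N), Ψ of the unit is the identity, and for each 'cone relation' the map satisfies Ψ_{Cone(f)} = Ψ_N − Ψ_M whenever f : M → N. Suppose M is invertible with inverse M̃, and there exist l maps f_1,…,f_l from the unit A to M^n shifted by m (so each Ψ_{Cone(f_i)} = (−1)^m Ψ_M^n − id) whose cones compose to zero. Then ((−1)^m Ψ_M^n − id)^l = 0 on G, and consequently (Ψ_M^{2n} − id)^l = 0. -/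
theorem sq_sub_one_pow_eq_zero {R : Type*} [Ring R] {a : R} {l : ℕ} (h : (a - 1) ^ l = 0) :
    (a ^ 2 - 1) ^ l = 0 := by
  have hcomm : Commute (a + 1) (a - 1) :=
    ((Commute.refl a).add_left (Commute.one_left a)).sub_right
      ((Commute.one_right a).add_left (Commute.one_left 1))
  rw [sq, mul_self_sub_one, hcomm.mul_pow, h, mul_zero]

theorem neg_one_pow_mul_sq {R : Type*} [Ring R] (m : ℕ) (x : R) : ((-1) ^ m * x) ^ 2 = x ^ 2 := by
  rw [((Commute.neg_one_left x).pow_left m).mul_pow, ← pow_mul, mul_comm, pow_mul, neg_one_sq,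
    one_pow, one_mul]

theorem List.prod_ofFn_const {α : Type*} [Monoid α] (l : ℕ) (a : α) :
    (List.ofFn fun _ : Fin l => a).prod = a ^ l := by
  rw [List.ofFn_const, List.prod_replicate]

theorem stmt1_general {G Mon : Type*} [AddCommGroup G] [Monoid Mon]
    (Ψ : Mon →* AddMonoid.End G) (M : Mon)
    (m n l : ℕ)
    (cone : Fin l → AddMonoid.End G)
    (hcone : ∀ i, cone i = (-1) ^ m * (Ψ M) ^ n - 1)
    (hzero : (List.ofFn cone).prod = 0) :
    ((-1) ^ m * (Ψ M) ^ n - 1) ^ l = 0 ∧ ((Ψ M) ^ (2 * n) - 1) ^ l = 0 := by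
  have hcyc : ((-1) ^ m * (Ψ M) ^ n - 1) ^ l = 0 := by
    rw [← hzero, funext hcone, List.prod_ofFn_const]
  refine ⟨hcyc, ?_⟩
  rw [mul_comm, pow_mul, ← neg_one_pow_mul_sq m]
  exact sq_sub_one_pow_eq_zero hcyc

/-- Grothendieck-group shadow of cyclotomicity: if `Ψ` is a multiplicative
assignment of additive endomorphisms of `G`, `M` is invertible, and there are
`l` "cone values" `(-1)^m Ψ_M^n - 1` whose product vanishes, then
`((-1)^m Ψ_M^n - 1)^l = 0`, hence `(Ψ_M^(2n) - 1)^l = 0`. -/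
theorem stmt1 {G Mon : Type*} [AddCommGroup G] [Monoid Mon]
    (Ψ : Mon →* AddMonoid.End G) (M M' : Mon)
    (hinv : M * M' = 1 ∧ M' * M = 1)
    (m n l : ℕ) (hn : 1 ≤ n) (hl : 1 ≤ l)
    (cone : Fin l → AddMonoid.End G)
    (hcone : ∀ i, cone i = (-1) ^ m * (Ψ M) ^ n - 1)
    (hzero : (List.ofFn cone).prod = 0) :
    ((-1) ^ m * (Ψ M) ^ n - 1) ^ l = 0 ∧ ((Ψ M) ^ (2 * n) - 1) ^ l = 0 :=
  stmt1_general Ψ M m n l cone hcone hzero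
end

section
/- Let a : ℕ × ℕ → ℕ satisfy a(k, i) ≤ a(k−1, i) + a(k−1, i+1) for all k ≥ 1 and all i, and a(k, l) = 0 for all k. Then for all k, a(k, 0) ≤ Σ_{i=0}^{l−1} C(k, i) · a(0, i). -/
/-!
Strengthen the claim to every column `j ≤ l`: `a(k,j) ≤ ∑_{i<l-j} C(k,i) a(0,j+i)`, and induct
on `k`. The recursion bounds `a(k+1,j)` by the bounds for columns `j` and `j+1`, which add up to the
bound for column `j` at level `k+1` by Pascal's rule; column `l` is zero, matching the empty sum.
-/

open Finset

theorem sum_range_succ_choose_succ_smul {M : Type*} [AddCommMonoid M] (f : ℕ → M) (k m : ℕ) :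
    ∑ i ∈ range (m + 1), (k + 1).choose i • f i =
      ∑ i ∈ range (m + 1), k.choose i • f i + ∑ i ∈ range m, k.choose i • f (i + 1) := by
  rw [sum_range_succ' _ m, sum_range_succ' _ m]
  simp only [Nat.choose_succ_succ, add_smul, sum_add_distrib, Nat.choose_zero_right]
  abel

theorem le_sum_range_choose_smul {M : Type*} [AddCommMonoid M] [PartialOrder M]
    [CanonicallyOrderedAdd M] [IsOrderedAddMonoid M] {a : ℕ → ℕ → M} {l : ℕ}
    (hrec : ∀ k i, a (k + 1) i ≤ a k i + a k (i + 1)) (hbdry : ∀ k, a k l = 0) (k : ℕ) :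
    ∀ j ≤ l, a k j ≤ ∑ i ∈ range (l - j), k.choose i • a 0 (j + i) := by
  induction k with
  | zero =>
    intro j hj
    obtain rfl | hjl := hj.eq_or_lt
    · simp [hbdry]
    rw [show l - j = l - (j + 1) + 1 by omega, sum_range_succ']
    simp
  | succ k ih =>
    intro j hj
    obtain rfl | hjl := hj.eq_or_lt
    · simp [hbdry]
    calc a (k + 1) j ≤ a k j + a k (j + 1) := hrec k j
      _ ≤ ∑ i ∈ range (l - j), k.choose i • a 0 (j + i) +
          ∑ i ∈ range (l - (j + 1)), k.choose i • a 0 (j + 1 + i) :=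
        add_le_add (ih j hj) (ih (j + 1) hjl)
      _ = ∑ i ∈ range (l - j), (k + 1).choose i • a 0 (j + i) := by
        rw [show l - j = l - (j + 1) + 1 by omega, sum_range_succ_choose_succ_smul]
        simp only [add_right_comm j 1, add_assoc]

/-- Pascal-type recursion with absorbing boundary at column `l`:
if `a(k,i) ≤ a(k-1,i) + a(k-1,i+1)` and `a(k,l) = 0`, then
`a(k,0) ≤ ∑_{i<l} C(k,i) * a(0,i)`. -/
theorem stmt13 (l : ℕ) (a : ℕ → ℕ → ℕ)
    (hrec : ∀ k, 1 ≤ k → ∀ i, a k i ≤ a (k - 1) i + a (k - 1) (i + 1))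
    (hbdry : ∀ k, a k l = 0) :
    ∀ k, a k 0 ≤ ∑ i ∈ Finset.range l, k.choose i * a 0 i := by
  intro k
  simpa using le_sum_range_choose_smul (fun k i => by simpa using hrec (k + 1) k.succ_pos i)
    hbdry k 0 l.zero_le
end

section
/- Let F, G be exact endofunctors of a triangulated category with generator T and let δ_t denote complexity with respect to T. If δ_t satisfies the subadditivity δ_t(T, X) ≤ δ_t(T, Y) + δ_t(T, Z) for every triangle Y → X → Z → Y[1], then for any family of objects X_0,…,X_l with triangles X_i → F X_i → X_{i+1} → X_i[1], X_0 = T, X_l = 0, the entropy h_t(F) = lim (1/N) log δ_t(T, F^N T) satisfies h_t(F) ≤ 0. -/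
/-!
Write `Fⁿ` for the `n`-th iterate of `F`. Applying `Fᴺ` to the triangles `Xᵢ → F Xᵢ → Xᵢ₊₁`
and using subadditivity gives `δ(Fᴺ⁺¹ Xᵢ) ≤ δ(Fᴺ Xᵢ) + δ(Fᴺ Xᵢ₊₁)`, with `δ(Fᴺ X_l) = 0`.
Pascal's rule then bounds `δ(Fᴺ Xᵢ)` by `M · C(N + l, l - i)`, where `M` bounds the `δ(Xⱼ)`.
Since `Real.log` sees only `|δ|`, a lower bound is needed as well: the rotated contractible
triangle `Y → 0 → Y[1]` gives `-δ(Y) ≤ δ(Y[1])`, and `Y ↦ δ(Y[1])` is again subadditive, so the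
same argument applies to it. Hence `|δ(Fᴺ T)|` grows polynomially in `N` and the entropy is `≤ 0`.
-/

open CategoryTheory CategoryTheory.Pretriangulated CategoryTheory.Limits ZeroObject Filter Topology

theorem CategoryTheory.Functor.isZero_iterate_obj {C : Type*} [Category C] [HasZeroMorphisms C]
    (F : C ⥤ C) [F.PreservesZeroMorphisms] {Z : C} (hZ : IsZero Z) (N : ℕ) :
    IsZero ((fun Y => F.obj Y)^[N] Z) := by
  induction N with
  | zero => exact hZ
  | succ N ih =>
    rw [Function.iterate_succ_apply']
    exact F.map_isZero ih

section Subadditive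

variable {C : Type*} [Category C] [HasZeroObject C] [Preadditive C]
    [HasShift C ℤ] [∀ (k : ℤ), (shiftFunctor C k).Additive] [Pretriangulated C]

def IsTriangleSubadditive (φ : C → ℝ) : Prop :=
  ∀ Tri ∈ distTriang C, φ Tri.obj₂ ≤ φ Tri.obj₁ + φ Tri.obj₃

def IsTriangleFiltration (F : C ⥤ C) (l : ℕ) (X : ℕ → C) : Prop :=
  ∀ i < l, ∃ (f : X i ⟶ F.obj (X i)) (g : F.obj (X i) ⟶ X (i + 1))
    (h : X (i + 1) ⟶ (X i)⟦(1 : ℤ)⟧), Triangle.mk f g h ∈ distTriang C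

namespace IsTriangleSubadditive

variable {φ : C → ℝ}

theorem comp_functor {D : Type*} [Category D] [HasZeroObject D] [Preadditive D]
    [HasShift D ℤ] [∀ (k : ℤ), (shiftFunctor D k).Additive] [Pretriangulated D]
    {ψ : D → ℝ} (hψ : IsTriangleSubadditive ψ) (F : C ⥤ D) [F.CommShift ℤ] [F.IsTriangulated] :
    IsTriangleSubadditive (fun X => ψ (F.obj X)) :=
  fun Tri hTri => hψ _ (F.map_distinguished Tri hTri)

theorem comp_iterate (hφ : IsTriangleSubadditive φ) (F : C ⥤ C) [F.CommShift ℤ]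
    [F.IsTriangulated] (N : ℕ) :
    IsTriangleSubadditive (fun X => φ ((fun Y => F.obj Y)^[N] X)) := by
  induction N with
  | zero => exact hφ
  | succ N ih => exact ih.comp_functor F

theorem comp_shift (hφ : IsTriangleSubadditive φ) (n : ℤ) :
    IsTriangleSubadditive (fun X => φ (X⟦n⟧)) :=
  fun Tri hTri => hφ _ (Triangle.shift_distinguished Tri hTri n)

theorem add_shift_nonneg (hφ : IsTriangleSubadditive φ) (h0 : ∀ Z, IsZero Z → φ Z = 0)
    (X : C) : 0 ≤ φ X + φ (X⟦(1 : ℤ)⟧) := by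
  have h : φ 0 ≤ φ X + φ (X⟦(1 : ℤ)⟧) :=
    hφ _ (rot_of_distTriang _ (contractible_distinguished X))
  rwa [h0 _ (isZero_zero C)] at h

variable (F : C ⥤ C) [F.CommShift ℤ] [F.IsTriangulated] {l : ℕ} {X : ℕ → C}

theorem le_mul_choose_of_filtration (hφ : IsTriangleSubadditive φ)
    (h0 : ∀ Z, IsZero Z → φ Z = 0) (hXl : IsZero (X l))
    (htri : IsTriangleFiltration F l X)
    {M : ℝ} (hM0 : 0 ≤ M) (hM : ∀ j ≤ l, φ (X j) ≤ M) (N : ℕ) {i : ℕ} (hi : i ≤ l) :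
    φ ((fun Y => F.obj Y)^[N] (X i)) ≤ M * (N + l).choose (l - i) := by
  induction N generalizing i with
  | zero =>
    have hchoose : (1 : ℝ) ≤ (0 + l).choose (l - i) := by
      exact_mod_cast Nat.choose_pos (by omega)
    exact (hM i hi).trans (le_mul_of_one_le_right hM0 hchoose)
  | succ N ih =>
    rcases hi.eq_or_lt with rfl | hil
    · rw [h0 _ (F.isZero_iterate_obj hXl _)]
      positivity
    obtain ⟨f, g, h, hT⟩ := htri i hil
    have hpascal : ((N + 1 + l).choose (l - i) : ℝ) =
        (N + l).choose (l - i) + (N + l).choose (l - (i + 1)) := by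
      rw [show l - i = l - (i + 1) + 1 by omega, show N + 1 + l = N + l + 1 by omega,
        Nat.choose_succ_succ']
      push_cast
      ring
    calc φ ((fun Y => F.obj Y)^[N + 1] (X i))
        ≤ φ ((fun Y => F.obj Y)^[N] (X i)) + φ ((fun Y => F.obj Y)^[N] (X (i + 1))) :=
          hφ.comp_iterate F N _ hT
      _ ≤ M * (N + l).choose (l - i) + M * (N + l).choose (l - (i + 1)) :=
          add_le_add (ih hi) (ih hil)
      _ = M * (N + 1 + l).choose (l - i) := by rw [hpascal]; ring

theorem exists_le_mul_choose_of_filtration (hφ : IsTriangleSubadditive φ)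
    (h0 : ∀ Z, IsZero Z → φ Z = 0) (hXl : IsZero (X l))
    (htri : IsTriangleFiltration F l X) :
    ∃ M, ∀ N, φ ((fun Y => F.obj Y)^[N] (X 0)) ≤ M * (N + l).choose l := by
  obtain ⟨M, hM⟩ := ((Set.finite_Iic l).image (φ ∘ X)).bddAbove
  refine ⟨max M 0, fun N => ?_⟩
  simpa using le_mul_choose_of_filtration F hφ h0 hXl htri (le_max_right M 0)
    (fun j hj => (hM ⟨j, hj, rfl⟩).trans (le_max_left M 0)) N (Nat.zero_le l)

theorem exists_abs_le_mul_choose_of_filtration (hφ : IsTriangleSubadditive φ)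
    (h0 : ∀ Z, IsZero Z → φ Z = 0) (hXl : IsZero (X l))
    (htri : IsTriangleFiltration F l X) :
    ∃ M, ∀ N, |φ ((fun Y => F.obj Y)^[N] (X 0))| ≤ M * (N + l).choose l := by
  obtain ⟨M₁, hM₁⟩ := hφ.exists_le_mul_choose_of_filtration F h0 hXl htri
  obtain ⟨M₂, hM₂⟩ := (hφ.comp_shift 1).exists_le_mul_choose_of_filtration F
    (fun Z hZ => h0 _ ((shiftFunctor C (1 : ℤ)).map_isZero hZ)) hXl htri
  refine ⟨max M₁ M₂, fun N => abs_le.2 ⟨?_, ?_⟩⟩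
  · have hshift := hφ.add_shift_nonneg h0 ((fun Y => F.obj Y)^[N] (X 0))
    have hM₂_le : M₂ * ((N + l).choose l : ℝ) ≤ max M₁ M₂ * (N + l).choose l := by
      gcongr; exact le_max_right _ _
    linarith [hM₂ N]
  · exact (hM₁ N).trans (by gcongr; exact le_max_left _ _)

end IsTriangleSubadditive

end Subadditive

theorem limsup_nonpos_of_eventually_le_of_tendsto {α : Type*} {f : Filter α} {u v : α → ℝ}
    (hv : Tendsto v f (𝓝 0)) (huv : ∀ᶠ n in f, u n ≤ v n) : limsup u f ≤ 0 := by
  rw [limsup_eq]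
  by_cases hbdd : BddBelow {a | ∀ᶠ n in f, u n ≤ a}
  · refine le_of_forall_gt_imp_ge_of_dense fun ε hε => csInf_le hbdd ?_
    filter_upwards [huv, hv.eventually_le_const hε] with n hn hvn
    exact hn.trans hvn
  · -- `sInf` of a set of reals that is not bounded below is `0`
    rw [Real.sInf_of_not_bddBelow hbdd]

theorem Real.log_le_log_of_abs_le {x y : ℝ} (hy : 1 ≤ y) (h : |x| ≤ y) :
    Real.log x ≤ Real.log y := by
  rw [← Real.log_abs]
  rcases (abs_nonneg x).eq_or_lt with hx | hx
  · rw [← hx, Real.log_zero]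
    exact Real.log_nonneg hy
  · exact Real.log_le_log hx h

theorem tendsto_log_natCast_add_div_atTop (a : ℝ) :
    Tendsto (fun N : ℕ => Real.log (N + a) / N) atTop (𝓝 0) := by
  refine ((Real.tendsto_pow_log_div_mul_add_atTop 1 (-a) 1 one_ne_zero).comp
    (tendsto_atTop_add_const_right _ a tendsto_natCast_atTop_atTop)).congr fun N => ?_
  simp

theorem limsup_log_div_nonpos_of_abs_le_mul_choose {u : ℕ → ℝ} {M : ℝ} {l : ℕ}
    (hu : ∀ N, |u N| ≤ M * (N + l).choose l) :
    limsup (fun N : ℕ => Real.log (u N) / N) atTop ≤ 0 := by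
  set M' := max M 1
  have hM' : 1 ≤ M' := le_max_right M 1
  have hlog : ∀ N : ℕ, Real.log (u N) ≤ Real.log M' + l * Real.log (N + l) := by
    intro N
    have hchoose : (1 : ℝ) ≤ (N + l).choose l := by exact_mod_cast Nat.choose_pos (by omega)
    have hchoose_pow : ((N + l).choose l : ℝ) ≤ ((N : ℝ) + l) ^ l := by
      exact_mod_cast Nat.choose_le_pow (N + l) l
    calc Real.log (u N) ≤ Real.log (M' * (N + l).choose l) :=
          Real.log_le_log_of_abs_le (one_le_mul_of_one_le_of_one_le hM' hchoose)
            ((hu N).trans (by gcongr; exact le_max_left M 1))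
      _ = Real.log M' + Real.log ((N + l).choose l) :=
          Real.log_mul (by positivity) (by positivity)
      _ ≤ Real.log M' + Real.log (((N : ℝ) + l) ^ l) := by gcongr
      _ = Real.log M' + l * Real.log (N + l) := by rw [Real.log_pow]
  refine limsup_nonpos_of_eventually_le_of_tendsto
    (v := fun N : ℕ => Real.log M' / N + l * (Real.log (N + l) / N)) ?_
    (Eventually.of_forall fun N => ?_)
  · simpa using (tendsto_const_div_atTop_nhds_zero_nat (Real.log M')).add
      ((tendsto_log_natCast_add_div_atTop l).const_mul (l : ℝ))
  · rw [← mul_div_assoc, ← add_div]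
    exact div_le_div_of_nonneg_right (hlog N) N.cast_nonneg

theorem stmt18_general {C : Type*} [Category C] [Limits.HasZeroObject C] [Preadditive C]
    [HasShift C ℤ] [∀ (k : ℤ), (shiftFunctor C k).Additive] [Pretriangulated C]
    (F : C ⥤ C) [F.CommShift ℤ] [F.IsTriangulated]
    (T : C) (δ : ℝ → C → ℝ)
    (hzero : ∀ t (Z : C), Limits.IsZero Z → δ t Z = 0)
    (hsub : ∀ t (Tri : Triangle C), Tri ∈ (distTriang C) →
      δ t Tri.obj₂ ≤ δ t Tri.obj₁ + δ t Tri.obj₃)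
    (l : ℕ) (X : ℕ → C) (hX0 : X 0 = T) (hXl : Limits.IsZero (X l))
    (htri : ∀ i < l, ∃ (f : X i ⟶ F.obj (X i)) (g : F.obj (X i) ⟶ X (i + 1))
      (h : X (i + 1) ⟶ (X i)⟦(1 : ℤ)⟧), Triangle.mk f g h ∈ distTriang C) :
    ∀ t : ℝ, Filter.limsup
      (fun N : ℕ => Real.log (δ t ((fun Y => F.obj Y)^[N] T)) / N) Filter.atTop ≤ 0 := by
  intro t
  subst hX0
  obtain ⟨M, hM⟩ :=
    IsTriangleSubadditive.exists_abs_le_mul_choose_of_filtration F (hsub t) (hzero t) hXl htri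
  exact limsup_log_div_nonpos_of_abs_le_mul_choose hM

/-- Lemma "entropy_1": if the complexity `δ` is subadditive over distinguished
triangles and there is a length-`l` filtration of the exact endofunctor `F` by
triangles `Xᵢ → F Xᵢ → Xᵢ₊₁ → Xᵢ[1]` with `X₀ = T` a generator and `X_l = 0`,
then the entropy `h_t(F) = lim (1/N) log δ_t(T, F^N T)` is `≤ 0` for all `t`. -/
theorem stmt18 {C : Type*} [Category C] [Limits.HasZeroObject C] [Preadditive C]
    [HasShift C ℤ] [∀ (k : ℤ), (shiftFunctor C k).Additive] [Pretriangulated C]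
    (F : C ⥤ C) [F.CommShift ℤ] [F.IsTriangulated] [F.Additive]
    (T : C) (δ : ℝ → C → ℝ)
    (hzero : ∀ t (Z : C), Limits.IsZero Z → δ t Z = 0)
    (hsub : ∀ t (Tri : Triangle C), Tri ∈ (distTriang C) →
      δ t Tri.obj₂ ≤ δ t Tri.obj₁ + δ t Tri.obj₃)
    (l : ℕ) (X : ℕ → C) (hX0 : X 0 = T) (hXl : Limits.IsZero (X l))
    (htri : ∀ i < l, ∃ (f : X i ⟶ F.obj (X i)) (g : F.obj (X i) ⟶ X (i + 1))
      (h : X (i + 1) ⟶ (X i)⟦(1 : ℤ)⟧), Triangle.mk f g h ∈ distTriang C) :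
    ∀ t : ℝ, Filter.limsup
      (fun N : ℕ => Real.log (δ t ((fun Y => F.obj Y)^[N] T)) / N) Filter.atTop ≤ 0 :=
  stmt18_general F T δ hzero hsub l X hX0 hXl htri
end
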